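/- There exists C > 0 with the following property. For all dyadic N, N₁, N₂, N₃ ≥ 1 and all m ∈ ℤ: (a) for every fixed (n, n₁), the number of pairs (n₂, n₃) with (n, n₁, n₂, n₃) ∈ S^{𝐍,(m)} is at most C min(N₂, N₃); (b) for every fixed (n, n₃), the number of pairs (n₁, n₂) with (n, n₁, n₂, n₃) ∈ S^{𝐍,(m)} is at most C min(N₁, N₂); (c) for every fixed (n₁, n₂), the number of pairs (n, n₃) with (n, n₁, n₂, n₃) ∈ S^{𝐍,(m)} is at most C min(N, N₃); (d) for every fixed (n₂, n₃), the number of pairs (n, n₁) with (n, n₁, n₂, n₃) ∈ S^{𝐍,(m)} is at most C min(N, N₁). -/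
import Mathlib


/-- Euclidean norm of a lattice point in `ℤ²`. -/
noncomputable def znorm (n : ℤ × ℤ) : ℝ := Real.sqrt ((n.1 : ℝ) ^ 2 + (n.2 : ℝ) ^ 2)

/-- Squared Euclidean norm `|n|²` of `n ∈ ℤ²`, as an integer. -/
def nsq (n : ℤ × ℤ) : ℤ := n.1 ^ 2 + n.2 ^ 2

/-- `φ(n̄) = |n|² − |n₁|² + |n₂|² − |n₃|²`. -/
def phiFn (n n₁ n₂ n₃ : ℤ × ℤ) : ℤ := nsq n - nsq n₁ + nsq n₂ - nsq n₃

/-- `N` is a dyadic number: `N = 2^k` for some integer `k ≥ 0`. -/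
def IsDyadic (N : ℝ) : Prop := ∃ k : ℕ, N = 2 ^ k

/-- `|n| ∼ N`: for dyadic `N ≥ 2` this means `N/2 < |n| ≤ N`; for `N = 1` it means `|n| ≤ 1`. -/
def simDyadic (N : ℝ) (n : ℤ × ℤ) : Prop :=
  (N = 1 ∧ znorm n ≤ 1) ∨ (N ≠ 1 ∧ N / 2 < znorm n ∧ znorm n ≤ N)

/-- Membership in the set `S^{𝐍,(m)}`. -/
def SMem (N N₁ N₂ N₃ : ℝ) (m : ℤ) (n n₁ n₂ n₃ : ℤ × ℤ) : Prop :=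
  n = n₁ - n₂ + n₃ ∧ n ≠ n₁ ∧ n ≠ n₃ ∧ phiFn n n₁ n₂ n₃ = m ∧
    simDyadic N n ∧ simDyadic N₁ n₁ ∧ simDyadic N₂ n₂ ∧ simDyadic N₃ n₃ 

lemma dyadic_one_le {N : ℝ} (h : IsDyadic N) : 1 ≤ N := by
  obtain ⟨k, rfl⟩ := h; exact one_le_pow₀ (by norm_num)

lemma ball_of_sim {N : ℝ} (hN : 1 ≤ N) {n : ℤ × ℤ} (h : simDyadic N n) :
    (n.1 : ℝ)^2 + (n.2 : ℝ)^2 ≤ N^2 := by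
  have hz : znorm n ≤ N := by
    rcases h with ⟨h1, h2⟩ | ⟨_, _, h2⟩
    · rw [h1]; exact h2
    · exact h2
  have h0 : (0:ℝ) ≤ (n.1:ℝ)^2 + (n.2:ℝ)^2 := by positivity
  calc (n.1:ℝ)^2 + (n.2:ℝ)^2 = (znorm n)^2 := (Real.sq_sqrt h0).symm
    _ ≤ N^2 := pow_le_pow_left₀ (Real.sqrt_nonneg _) hz 2

lemma pairs_bound (S : Set ((ℤ×ℤ)×(ℤ×ℤ))) (π : ((ℤ×ℤ)×(ℤ×ℤ)) → ℤ×ℤ)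
    (a b c : ℤ) (hab : ¬(a = 0 ∧ b = 0)) (R : ℝ) (hR : 1 ≤ R)
    (hline : ∀ p ∈ S, a * (π p).1 + b * (π p).2 = c)
    (hball : ∀ p ∈ S, ((π p).1 : ℝ)^2 + ((π p).2 : ℝ)^2 ≤ R^2)
    (hinj : Set.InjOn π S) :
    (S.ncard : ℝ) ≤ 5 * R := by
  have hq : 0 < a^2 + b^2 := by
    rcases not_and_or.mp hab with h | h <;> positivity
  have hqR : (0:ℝ) < ((a^2 + b^2 : ℤ) : ℝ) := by exact_mod_cast hq
  have hq' : (0:ℝ) < Real.sqrt ((a^2+b^2 : ℤ) : ℝ) := Real.sqrt_pos.mpr hqR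
  set F : ((ℤ×ℤ)×(ℤ×ℤ)) → ℤ :=
    fun p => ⌊((a * (π p).2 - b * (π p).1 : ℤ) : ℝ) / Real.sqrt ((a^2+b^2 : ℤ) : ℝ)⌋ with hF
  have key : ∀ p ∈ S, |((a * (π p).2 - b * (π p).1 : ℤ) : ℝ) / Real.sqrt ((a^2+b^2 : ℤ) : ℝ)| ≤ R := by
    intro p hp
    have hcs : (((a * (π p).2 - b * (π p).1 : ℤ) : ℝ))^2 ≤ ((a^2+b^2 : ℤ) : ℝ) * R^2 := by
      have h1 : (((a * (π p).2 - b * (π p).1 : ℤ) : ℝ))^2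
          ≤ ((a^2+b^2 : ℤ) : ℝ) * (((π p).1:ℝ)^2 + ((π p).2:ℝ)^2) := by
        push_cast
        nlinarith [sq_nonneg ((a:ℝ) * ((π p).1:ℝ) + (b:ℝ) * ((π p).2:ℝ))]
      have h2 := hball p hp
      nlinarith [h1, h2, hqR]
    rw [abs_div, abs_of_pos hq', div_le_iff₀ hq']
    have : |(((a * (π p).2 - b * (π p).1 : ℤ) : ℝ))| = Real.sqrt ((((a * (π p).2 - b * (π p).1 : ℤ) : ℝ))^2) :=
      (Real.sqrt_sq_eq_abs _).symm
    rw [this]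
    calc Real.sqrt ((((a * (π p).2 - b * (π p).1 : ℤ) : ℝ))^2)
        ≤ Real.sqrt (((a^2+b^2 : ℤ) : ℝ) * R^2) := Real.sqrt_le_sqrt hcs
      _ = Real.sqrt ((a^2+b^2 : ℤ) : ℝ) * R := by
          rw [Real.sqrt_mul hqR.le, Real.sqrt_sq (by linarith)]
      _ = R * Real.sqrt ((a^2+b^2 : ℤ) : ℝ) := by ring
  have hmaps : ∀ p ∈ S, F p ∈ Set.Icc (-(⌊R⌋+1)) (⌊R⌋+1) := by
    intro p hp
    have habs := key p hp
    set u := ((a * (π p).2 - b * (π p).1 : ℤ) : ℝ) / Real.sqrt ((a^2+b^2 : ℤ) : ℝ) with hu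
    rw [abs_le] at habs
    have hFp : F p = ⌊u⌋ := rfl
    rw [hFp, Set.mem_Icc]
    constructor
    · have l1 : u - 1 < (⌊u⌋ : ℝ) := Int.sub_one_lt_floor u
      have l2 : R - 1 < (⌊R⌋ : ℝ) := Int.sub_one_lt_floor R
      have hlt : ((-(⌊R⌋+1) : ℤ) : ℝ) < ((⌊u⌋ : ℤ) : ℝ) + 1 := by push_cast; linarith [habs.1]
      have := (by exact_mod_cast hlt : (-(⌊R⌋+1) : ℤ) < ⌊u⌋ + 1)
      omega
    · have : (⌊u⌋ : ℤ) ≤ ⌊R⌋ := Int.floor_le_floor habs.2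
      omega
  have hFinj : Set.InjOn F S := by
    intro p hp p' hp' hFe
    apply hinj hp hp'
    have hl1 := hline p hp
    have hl2 := hline p' hp'
    set u := ((a * (π p).2 - b * (π p).1 : ℤ) : ℝ) / Real.sqrt ((a^2+b^2 : ℤ) : ℝ) with hudef
    set u' := ((a * (π p').2 - b * (π p').1 : ℤ) : ℝ) / Real.sqrt ((a^2+b^2 : ℤ) : ℝ) with hudef'
    have hflr : ⌊u⌋ = ⌊u'⌋ := hFe
    have hlt : |u - u'| < 1 := by
      rw [abs_sub_lt_iff]
      constructor
      · calc u - u' < (⌊u⌋ + 1) - u' := by linarith [Int.lt_floor_add_one u]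
          _ ≤ 1 := by rw [hflr]; linarith [Int.floor_le u']
      · calc u' - u < (⌊u'⌋ + 1) - u := by linarith [Int.lt_floor_add_one u']
          _ ≤ 1 := by rw [← hflr]; linarith [Int.floor_le u]
    set D : ℤ := (a * (π p).2 - b * (π p).1) - (a * (π p').2 - b * (π p').1) with hD
    have hdq : u - u' = ((D : ℤ) : ℝ) / Real.sqrt ((a^2+b^2 : ℤ) : ℝ) := by
      rw [hudef, hudef', hD]; push_cast; ring
    have hs : Real.sqrt ((a^2+b^2:ℤ):ℝ) ^ 2 = ((a^2+b^2:ℤ):ℝ) := Real.sq_sqrt hqR.le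
    have hD2 : ((D:ℝ))^2 < ((a^2+b^2:ℤ):ℝ) := by
      have h1 : |(D:ℝ)| / Real.sqrt ((a^2+b^2:ℤ):ℝ) < 1 := by
        rw [hdq] at hlt
        rwa [abs_div, abs_of_pos hq'] at hlt
      have h2 : |(D:ℝ)| < Real.sqrt ((a^2+b^2:ℤ):ℝ) := by
        rwa [div_lt_one hq'] at h1
      nlinarith [abs_nonneg ((D:ℝ)), sq_abs ((D:ℝ))]
    have hD2' : D^2 < a^2 + b^2 := by exact_mod_cast hD2
    have hlin : a * ((π p).1 - (π p').1) + b * ((π p).2 - (π p').2) = 0 := by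
      linear_combination hl1 - hl2
    have hiden : D^2 = (a^2+b^2) * (((π p).1 - (π p').1)^2 + ((π p).2 - (π p').2)^2)
        - (a * ((π p).1 - (π p').1) + b * ((π p).2 - (π p').2))^2 := by
      rw [hD]; ring
    rw [hlin] at hiden
    have hzero : ((π p).1 - (π p').1)^2 + ((π p).2 - (π p').2)^2 = 0 := by
      nlinarith [sq_nonneg ((π p).1 - (π p').1), sq_nonneg ((π p).2 - (π p').2)]
    have z1 : (π p).1 - (π p').1 = 0 := by
      have h1 : ((π p).1 - (π p').1)^2 = 0 :=
        le_antisymm (by nlinarith [sq_nonneg ((π p).2 - (π p').2)]) (sq_nonneg _)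
      exact pow_eq_zero_iff (two_ne_zero) |>.mp h1
    have z2 : (π p).2 - (π p').2 = 0 := by
      have h1 : ((π p).2 - (π p').2)^2 = 0 :=
        le_antisymm (by nlinarith [sq_nonneg ((π p).1 - (π p').1)]) (sq_nonneg _)
      exact pow_eq_zero_iff (two_ne_zero) |>.mp h1
    exact Prod.ext (sub_eq_zero.mp z1) (sub_eq_zero.mp z2)
  have hcard := Set.ncard_le_ncard_of_injOn F hmaps hFinj (Set.finite_Icc _ _)
  have hIcc : (Set.Icc (-(⌊R⌋+1)) (⌊R⌋+1)).ncard = (2*⌊R⌋+3).toNat := by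
    rw [← Finset.coe_Icc, Set.ncard_coe_finset, Int.card_Icc]
    congr 1; ring
  have hfl : (1:ℤ) ≤ ⌊R⌋ := by exact_mod_cast Int.le_floor.mpr (by exact_mod_cast hR)
  have hfin : ((2*⌊R⌋+3).toNat : ℝ) ≤ 5 * R := by
    have h1 : ((2*⌊R⌋+3).toNat : ℤ) = 2*⌊R⌋+3 := Int.toNat_of_nonneg (by omega)
    have h2 : (((2*⌊R⌋+3).toNat : ℤ) : ℝ) = ((2*⌊R⌋+3 : ℤ) : ℝ) := by exact_mod_cast h1
    push_cast at h2 ⊢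
    rw [h2]
    have := Int.floor_le R
    linarith
  calc (S.ncard : ℝ) ≤ ((Set.Icc (-(⌊R⌋+1)) (⌊R⌋+1)).ncard : ℝ) := by exact_mod_cast hcard
    _ = ((2*⌊R⌋+3).toNat : ℝ) := by rw [hIcc]
    _ ≤ 5 * R := hfin

lemma main_case (S : Set ((ℤ×ℤ)×(ℤ×ℤ))) (A B : ℝ) (hA : 1 ≤ A) (hB : 1 ≤ B)
    (h : S.Nonempty → ∃ (a b c c' : ℤ),
      ¬(a = 0 ∧ b = 0) ∧ ∃ w : ℤ×ℤ,
      ∀ p ∈ S, p.2 = p.1 + w ∧ (a * p.1.1 + b * p.1.2 = c) ∧ (a * p.2.1 + b * p.2.2 = c') ∧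
        ((p.1.1:ℝ)^2 + (p.1.2:ℝ)^2 ≤ A^2) ∧ ((p.2.1:ℝ)^2 + (p.2.2:ℝ)^2 ≤ B^2)) :
    (S.ncard : ℝ) ≤ 5 * min A B := by
  rcases S.eq_empty_or_nonempty with hS | hS
  · rw [hS]
    simp only [Set.ncard_empty, Nat.cast_zero]
    have : (1:ℝ) ≤ min A B := le_min hA hB
    linarith
  · obtain ⟨a, b, c, c', hab, w, hw⟩ := h hS
    rcases le_total A B with hAB | hAB
    · rw [min_eq_left hAB]
      apply pairs_bound S Prod.fst a b c hab A hA
      · intro p hp; exact (hw p hp).2.1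
      · intro p hp; exact (hw p hp).2.2.2.1
      · intro p hp p' hp' he
        have h1 := (hw p hp).1; have h2 := (hw p' hp').1
        have hsnd : p.2 = p'.2 := by rw [h1, h2, he]
        exact Prod.ext he hsnd
    · rw [min_eq_right hAB]
      apply pairs_bound S Prod.snd a b c' hab B hB
      · intro p hp; exact (hw p hp).2.2.1
      · intro p hp; exact (hw p hp).2.2.2.2
      · intro p hp p' hp' he
        have h1 := (hw p hp).1; have h2 := (hw p' hp').1
        have hfst : p.1 = p'.1 := by
          have hx : p.1 + w = p'.1 + w := by rw [← h1, ← h2, he]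
          exact add_right_cancel hx
        exact Prod.ext hfst he

theorem stmt11 :
    ∃ C : ℝ, 0 < C ∧ ∀ N N₁ N₂ N₃ : ℝ,
      IsDyadic N → IsDyadic N₁ → IsDyadic N₂ → IsDyadic N₃ → ∀ m : ℤ,
      (∀ n n₁ : ℤ × ℤ,
        (({p : (ℤ × ℤ) × (ℤ × ℤ) | SMem N N₁ N₂ N₃ m n n₁ p.1 p.2}).ncard : ℝ) ≤
          C * min N₂ N₃) ∧
      (∀ n n₃ : ℤ × ℤ,
        (({p : (ℤ × ℤ) × (ℤ × ℤ) | SMem N N₁ N₂ N₃ m n p.1 p.2 n₃}).ncard : ℝ) ≤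
          C * min N₁ N₂) ∧
      (∀ n₁ n₂ : ℤ × ℤ,
        (({p : (ℤ × ℤ) × (ℤ × ℤ) | SMem N N₁ N₂ N₃ m p.1 n₁ n₂ p.2}).ncard : ℝ) ≤
          C * min N N₃) ∧
      (∀ n₂ n₃ : ℤ × ℤ,
        (({p : (ℤ × ℤ) × (ℤ × ℤ) | SMem N N₁ N₂ N₃ m p.1 p.2 n₂ n₃}).ncard : ℝ) ≤
          C * min N N₁) := by
  refine ⟨5, by norm_num, ?_⟩
  intro N N₁ N₂ N₃ hN hN₁ hN₂ hN₃ m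
  have h1N := dyadic_one_le hN
  have h1N₁ := dyadic_one_le hN₁
  have h1N₂ := dyadic_one_le hN₂
  have h1N₃ := dyadic_one_le hN₃
  refine ⟨?_, ?_, ?_, ?_⟩
  -- case (a): fixed n, n₁
  · intro n n₁
    apply main_case _ N₂ N₃ h1N₂ h1N₃
    rintro ⟨p₀, hp₀⟩
    simp only [Set.mem_setOf_eq] at hp₀
    have hv : n - n₁ ≠ 0 := sub_ne_zero.mpr hp₀.2.1
    refine ⟨2*(n.1-n₁.1), 2*(n.2-n₁.2),
      2*((n.1-n₁.1)*n₁.1+(n.2-n₁.2)*n₁.2) - m,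
      2*((n.1-n₁.1)*n.1+(n.2-n₁.2)*n.2) - m, ?_, n - n₁, ?_⟩
    · rintro ⟨e1, e2⟩
      exact hv (Prod.ext (by simp; omega) (by simp; omega))
    · rintro ⟨⟨x1, x2⟩, ⟨y1, y2⟩⟩ hp
      simp only [Set.mem_setOf_eq] at hp
      obtain ⟨hrel, -, -, hphi, -, -, hs2, hs3⟩ := hp
      have h1 := congrArg Prod.fst hrel
      have h2 := congrArg Prod.snd hrel
      simp at h1 h2
      have hy1 : y1 = n.1 - n₁.1 + x1 := by omega
      have hy2 : y2 = n.2 - n₁.2 + x2 := by omega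
      subst hy1; subst hy2
      simp only [phiFn, nsq] at hphi
      refine ⟨?_, ?_, ?_, ball_of_sim h1N₂ hs2, ball_of_sim h1N₃ hs3⟩
      · rw [Prod.ext_iff]; constructor <;> simp <;> ring
      · linear_combination -hphi
      · linear_combination -hphi
  -- case (b): fixed n, n₃
  · intro n n₃
    apply main_case _ N₁ N₂ h1N₁ h1N₂
    rintro ⟨p₀, hp₀⟩
    simp only [Set.mem_setOf_eq] at hp₀
    have hv : n - n₃ ≠ 0 := sub_ne_zero.mpr hp₀.2.2.1
    refine ⟨2*(n.1-n₃.1), 2*(n.2-n₃.2),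
      2*((n.1-n₃.1)*n.1+(n.2-n₃.2)*n.2) - m,
      2*((n.1-n₃.1)*n₃.1+(n.2-n₃.2)*n₃.2) - m, ?_, n₃ - n, ?_⟩
    · rintro ⟨e1, e2⟩
      exact hv (Prod.ext (by simp; omega) (by simp; omega))
    · rintro ⟨⟨x1, x2⟩, ⟨y1, y2⟩⟩ hp
      simp only [Set.mem_setOf_eq] at hp
      obtain ⟨hrel, -, -, hphi, -, hs1, hs2, -⟩ := hp
      have h1 := congrArg Prod.fst hrel
      have h2 := congrArg Prod.snd hrel
      simp at h1 h2
      have hy1 : y1 = x1 + n₃.1 - n.1 := by omega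
      have hy2 : y2 = x2 + n₃.2 - n.2 := by omega
      subst hy1; subst hy2
      simp only [phiFn, nsq] at hphi
      refine ⟨?_, ?_, ?_, ball_of_sim h1N₁ hs1, ball_of_sim h1N₂ hs2⟩
      · rw [Prod.ext_iff]; constructor <;> simp <;> ring
      · linear_combination -hphi
      · linear_combination -hphi
  -- case (c): fixed n₁, n₂
  · intro n₁ n₂
    apply main_case _ N N₃ h1N h1N₃
    rintro ⟨p₀, hp₀⟩
    simp only [Set.mem_setOf_eq] at hp₀
    have hv : n₁ - n₂ ≠ 0 := by
      intro h
      exact hp₀.2.2.1 (by rw [hp₀.1, h, zero_add])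
    refine ⟨2*(n₁.1-n₂.1), 2*(n₁.2-n₂.2),
      2*((n₁.1-n₂.1)*n₁.1+(n₁.2-n₂.2)*n₁.2) + m,
      2*((n₁.1-n₂.1)*n₂.1+(n₁.2-n₂.2)*n₂.2) + m, ?_, n₂ - n₁, ?_⟩
    · rintro ⟨e1, e2⟩
      exact hv (Prod.ext (by simp; omega) (by simp; omega))
    · rintro ⟨⟨x1, x2⟩, ⟨y1, y2⟩⟩ hp
      simp only [Set.mem_setOf_eq] at hp
      obtain ⟨hrel, -, -, hphi, hsN, -, -, hs3⟩ := hp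
      have h1 := congrArg Prod.fst hrel
      have h2 := congrArg Prod.snd hrel
      simp at h1 h2
      have hx1 : x1 = n₁.1 - n₂.1 + y1 := by omega
      have hx2 : x2 = n₁.2 - n₂.2 + y2 := by omega
      subst hx1; subst hx2
      simp only [phiFn, nsq] at hphi
      refine ⟨?_, ?_, ?_, ball_of_sim h1N hsN, ball_of_sim h1N₃ hs3⟩
      · rw [Prod.ext_iff]; constructor <;> simp <;> ring
      · linear_combination hphi
      · linear_combination hphi
  -- case (d): fixed n₂, n₃
  · intro n₂ n₃
    apply main_case _ N N₁ h1N h1N₁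
    rintro ⟨p₀, hp₀⟩
    simp only [Set.mem_setOf_eq] at hp₀
    have hv : n₃ - n₂ ≠ 0 := by
      intro h
      apply hp₀.2.1
      rw [hp₀.1, show p₀.2 - n₂ + n₃ = p₀.2 + (n₃ - n₂) from by ring, h, add_zero]
    refine ⟨2*(n₃.1-n₂.1), 2*(n₃.2-n₂.2),
      2*((n₃.1-n₂.1)*n₃.1+(n₃.2-n₂.2)*n₃.2) + m,
      2*((n₃.1-n₂.1)*n₂.1+(n₃.2-n₂.2)*n₂.2) + m, ?_, n₂ - n₃, ?_⟩
    · rintro ⟨e1, e2⟩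
      exact hv (Prod.ext (by simp; omega) (by simp; omega))
    · rintro ⟨⟨x1, x2⟩, ⟨y1, y2⟩⟩ hp
      simp only [Set.mem_setOf_eq] at hp
      obtain ⟨hrel, -, -, hphi, hsN, hs1, -, -⟩ := hp
      have h1 := congrArg Prod.fst hrel
      have h2 := congrArg Prod.snd hrel
      simp at h1 h2
      have hx1 : x1 = y1 - n₂.1 + n₃.1 := by omega
      have hx2 : x2 = y2 - n₂.2 + n₃.2 := by omega
      subst hx1; subst hx2
      simp only [phiFn, nsq] at hphi
      refine ⟨?_, ?_, ?_, ball_of_sim h1N hsN, ball_of_sim h1N₁ hs1⟩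
      · rw [Prod.ext_iff]; constructor <;> simp <;> ring
      · linear_combination hphi
      · linear_combination hphi
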